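/- arXiv:2112.14250 — 7 statements merged into one kernel-verified Lean document; each statement's English description precedes it below -/
import Mathlib

section
/- Suppose a sublattice of ℤ³ has a basis x₁, x₂, x₃ of mutually orthogonal vectors all of the same Euclidean length ℓ > 0. Then ℓ is a positive integer. -/
/-!
The matrix `A` with rows `x₁, x₂, x₃` satisfies `A Aᵀ = ℓ² I` with `n = ℓ²` an integer, so
`(det A)² = n³`. Hence `n = (det A / n)²` is the square of a rational number, so of an integer,
and `ℓ = √n` is a natural number.
-/

theorem Int.isSquare_of_sq_eq_pow_of_odd {d n : ℤ} {k : ℕ} (hk : Odd k) (h : d ^ 2 = n ^ k) :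
    IsSquare n := by
  obtain ⟨j, rfl⟩ := hk
  rcases eq_or_ne n 0 with rfl | hn
  · exact ⟨0, by simp⟩
  rw [← Rat.isSquare_intCast_iff]
  refine ⟨d / n ^ j, ?_⟩
  have hq : (d : ℚ) ^ 2 = (n : ℚ) ^ (2 * j + 1) := mod_cast h
  rw [div_mul_div_comm, eq_div_iff (by positivity)]
  linear_combination -hq

open Matrix in
theorem Matrix.det_sq_of_mul_transpose_eq_smul_one {ι R : Type*} [Fintype ι] [DecidableEq ι]
    [CommRing R] {A : Matrix ι ι R} {n : R} (h : A * Aᵀ = n • 1) :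
    A.det ^ 2 = n ^ Fintype.card ι := by
  simpa [sq, det_transpose] using congrArg det h

theorem cubic_sublattice_length_integer (ℓ : ℝ) (hℓ : 0 < ℓ)
    (x₁ x₂ x₃ : ℤ × ℤ × ℤ)
    (h11 : (x₁.1 : ℝ) ^ 2 + (x₁.2.1 : ℝ) ^ 2 + (x₁.2.2 : ℝ) ^ 2 = ℓ ^ 2)
    (h22 : (x₂.1 : ℝ) ^ 2 + (x₂.2.1 : ℝ) ^ 2 + (x₂.2.2 : ℝ) ^ 2 = ℓ ^ 2)
    (h33 : (x₃.1 : ℝ) ^ 2 + (x₃.2.1 : ℝ) ^ 2 + (x₃.2.2 : ℝ) ^ 2 = ℓ ^ 2)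
    (h12 : (x₁.1 : ℝ) * x₂.1 + (x₁.2.1 : ℝ) * x₂.2.1 + (x₁.2.2 : ℝ) * x₂.2.2 = 0)
    (h13 : (x₁.1 : ℝ) * x₃.1 + (x₁.2.1 : ℝ) * x₃.2.1 + (x₁.2.2 : ℝ) * x₃.2.2 = 0)
    (h23 : (x₂.1 : ℝ) * x₃.1 + (x₂.2.1 : ℝ) * x₃.2.1 + (x₂.2.2 : ℝ) * x₃.2.2 = 0) :
    ∃ n : ℕ, ℓ = n := by
  set n : ℤ := x₁.1 ^ 2 + x₁.2.1 ^ 2 + x₁.2.2 ^ 2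
  have hn : (n : ℝ) = ℓ ^ 2 := by push_cast [n]; exact h11
  set A : Matrix (Fin 3) (Fin 3) ℤ :=
    !![x₁.1, x₁.2.1, x₁.2.2; x₂.1, x₂.2.1, x₂.2.2; x₃.1, x₃.2.1, x₃.2.2]
  have h22' : x₂.1 ^ 2 + x₂.2.1 ^ 2 + x₂.2.2 ^ 2 = n := by exact_mod_cast h22.trans hn.symm
  have h33' : x₃.1 ^ 2 + x₃.2.1 ^ 2 + x₃.2.2 ^ 2 = n := by exact_mod_cast h33.trans hn.symm
  have h12' : x₁.1 * x₂.1 + x₁.2.1 * x₂.2.1 + x₁.2.2 * x₂.2.2 = 0 := by exact_mod_cast h12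
  have h13' : x₁.1 * x₃.1 + x₁.2.1 * x₃.2.1 + x₁.2.2 * x₃.2.2 = 0 := by exact_mod_cast h13
  have h23' : x₂.1 * x₃.1 + x₂.2.1 * x₃.2.1 + x₂.2.2 * x₃.2.2 = 0 := by exact_mod_cast h23
  have hA : A * A.transpose = n • 1 := by
    ext i j
    fin_cases i <;> fin_cases j <;>
      simp [A, Matrix.mul_apply, Fin.sum_univ_three] <;> linarith
  obtain ⟨r, hr⟩ := Int.isSquare_of_sq_eq_pow_of_odd (by decide)
    (Matrix.det_sq_of_mul_transpose_eq_smul_one hA)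
  refine ⟨r.natAbs, (sq_eq_sq₀ hℓ.le (by positivity)).1 ?_⟩
  rw [Nat.cast_natAbs, Int.cast_abs, sq_abs, ← hn, hr]
  push_cast
  ring
end

section
/- The lattice φ = { m·(0,3,1) + n·(0,−1,3) + k·(2,1,2) : m, n, k ∈ ℤ } ⊆ ℤ³ is a subgroup of ℤ³ of index 20, and every nonzero vector of φ has squared Euclidean norm at least 9. -/
/-!
The quotient `ℤ³ / φ` is cyclic of order 20, so `φ` is the kernel of a single linear form
modulo 20, namely `(a, b, c) ↦ 5a − 6b − 2c`, which vanishes modulo 20 on the three basis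
vectors. The index is then the order of `ZMod 20`, and the minimum norm follows from checking
the finitely many nonzero integer vectors of squared norm at most 8 against the congruence.
-/

def dfccForm : ℤ × ℤ × ℤ →+ ZMod 20 where
  toFun v := ((5 * v.1 - 6 * v.2.1 - 2 * v.2.2 : ℤ) : ZMod 20)
  map_zero' := by simp
  map_add' := by
    rintro ⟨a, b, c⟩ ⟨a', b', c'⟩
    simp only [Prod.mk_add_mk]
    push_cast
    ring

theorem mem_ker_dfccForm_iff (a b c : ℤ) :
    (a, b, c) ∈ dfccForm.ker ↔ (20 : ℤ) ∣ 5 * a - 6 * b - 2 * c :=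
  ZMod.intCast_zmod_eq_zero_iff_dvd _ 20

theorem dfccForm_surjective : Function.Surjective dfccForm := by
  intro x
  refine ⟨((x.val : ℤ), 0, 2 * (x.val : ℤ)), ?_⟩
  change ((5 * (x.val : ℤ) - 6 * 0 - 2 * (2 * (x.val : ℤ)) : ℤ) : ZMod 20) = x
  push_cast
  rw [ZMod.natCast_zmod_val]
  ring

theorem index_ker_dfccForm : dfccForm.ker.index = 20 := by
  rw [AddSubgroup.index_ker, AddMonoidHom.range_eq_top.mpr dfccForm_surjective]
  simp

theorem exists_coords_iff_dvd (a b c : ℤ) :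
    (∃ m n k : ℤ, (a, b, c) = (2 * k, 3 * m - n + k, m + 3 * n + 2 * k)) ↔
      (20 : ℤ) ∣ 5 * a - 6 * b - 2 * c := by
  simp only [Prod.mk.injEq]
  constructor
  · rintro ⟨m, n, k, rfl, rfl, rfl⟩
    exact ⟨-m, by ring⟩
  · rintro ⟨t, ht⟩
    obtain ⟨k, hk⟩ : (2 : ℤ) ∣ a := by omega
    obtain ⟨m, hm⟩ : (10 : ℤ) ∣ 3 * b + c - 5 * k := by omega
    obtain ⟨n, hn⟩ : (10 : ℤ) ∣ 3 * c - b - 5 * k := by omega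
    exact ⟨m, n, k, by omega⟩

theorem coe_ker_dfccForm :
    (dfccForm.ker : Set (ℤ × ℤ × ℤ)) =
      {v | ∃ m n k : ℤ, v = (2 * k, 3 * m - n + k, m + 3 * n + 2 * k)} := by
  ext ⟨a, b, c⟩
  exact (mem_ker_dfccForm_iff a b c).trans (exists_coords_iff_dvd a b c).symm

theorem abs_lt_three_of_sq_le_eight {x : ℤ} (hx : x ^ 2 ≤ 8) : |x| < 3 :=
  abs_lt_of_sq_lt_sq (by omega) (by norm_num)

theorem nine_le_sq_add_sq_add_sq_of_dvd {a b c : ℤ} (h : (20 : ℤ) ∣ 5 * a - 6 * b - 2 * c)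
    (hne : (a, b, c) ≠ 0) : 9 ≤ a ^ 2 + b ^ 2 + c ^ 2 := by
  by_contra! hlt
  obtain ⟨ha₁, ha₂⟩ := abs_lt.mp (abs_lt_three_of_sq_le_eight (x := a) (by nlinarith))
  obtain ⟨hb₁, hb₂⟩ := abs_lt.mp (abs_lt_three_of_sq_le_eight (x := b) (by nlinarith))
  obtain ⟨hc₁, hc₂⟩ := abs_lt.mp (abs_lt_three_of_sq_le_eight (x := c) (by nlinarith))
  simp only [ne_eq, Prod.mk_eq_zero] at hne
  interval_cases a <;> interval_cases b <;> interval_cases c <;> omega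

theorem dfcc_D2_9 :
    ∃ H : AddSubgroup (ℤ × ℤ × ℤ),
      (H : Set (ℤ × ℤ × ℤ)) =
        {v | ∃ m n k : ℤ, v = (2 * k, 3 * m - n + k, m + 3 * n + 2 * k)} ∧
      H.index = 20 ∧
      ∀ v : ℤ × ℤ × ℤ, v ∈ H → v ≠ 0 →
        v.1 ^ 2 + v.2.1 ^ 2 + v.2.2 ^ 2 ≥ 9 := by
  refine ⟨dfccForm.ker, coe_ker_dfccForm, index_ker_dfccForm, ?_⟩
  rintro ⟨a, b, c⟩ hv hne
  exact nine_le_sq_add_sq_add_sq_of_dvd ((mem_ker_dfccForm_iff a b c).mp hv) hne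
end

section
/- The lattice φ = { m·(−1,−3,4) + n·(3,−4,1) + k·(0,3,−1) : m, n, k ∈ ℤ } ⊆ ℤ³ is a subgroup of ℤ³ of index 26, and every nonzero vector of φ has squared Euclidean norm at least 10. -/
private def dfccF : (ℤ × ℤ × ℤ) →+ ZMod 26 :=
  AddMonoidHom.mk' (fun v => (9 * v.1 + v.2.1 + 3 * v.2.2 : ℤ)) (by
    intro a b
    simp only [Prod.fst_add, Prod.snd_add]
    push_cast
    ring)

private lemma dfccF_eq_zero_iff (x y z : ℤ) :
    dfccF (x, y, z) = 0 ↔ (26 : ℤ) ∣ 9 * x + y + 3 * z := by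
  have h1 : dfccF (x, y, z) = ((9 * x + y + 3 * z : ℤ) : ZMod 26) := by
    show ((9 * x + y + 3 * z : ℤ) : ZMod 26) = _
    push_cast
    ring
  rw [h1, ZMod.intCast_zmod_eq_zero_iff_dvd]
  norm_num

theorem dfcc_D2_10 :
    ∃ H : AddSubgroup (ℤ × ℤ × ℤ),
      (H : Set (ℤ × ℤ × ℤ)) =
        {v | ∃ m n k : ℤ, v = (-m + 3 * n, -3 * m - 4 * n + 3 * k, 4 * m + n - k)} ∧
      H.index = 26 ∧
      ∀ v : ℤ × ℤ × ℤ, v ∈ H → v ≠ 0 →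
        v.1 ^ 2 + v.2.1 ^ 2 + v.2.2 ^ 2 ≥ 10 := by
  refine ⟨dfccF.ker, ?_, ?_, ?_⟩
  · ext ⟨x, y, z⟩
    simp only [SetLike.mem_coe, AddMonoidHom.mem_ker, Set.mem_setOf_eq]
    rw [dfccF_eq_zero_iff]
    constructor
    · intro h
      obtain ⟨t, ht⟩ := h
      exact ⟨3 * t - x, t, 13 * t - 4 * x - z, by
        simp only [Prod.mk.injEq]; omega⟩
    · rintro ⟨m, n, k, hv⟩
      rw [Prod.mk.injEq, Prod.mk.injEq] at hv
      obtain ⟨h1, h2, h3⟩ := hv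
      exact ⟨n, by omega⟩
  · have hsurj : Function.Surjective dfccF := by
      intro c
      obtain ⟨y, rfl⟩ := ZMod.intCast_surjective c
      refine ⟨(0, y, 0), ?_⟩
      show ((9 * 0 + y + 3 * 0 : ℤ) : ZMod 26) = _
      push_cast
      ring
    rw [AddSubgroup.index_ker, AddMonoidHom.range_eq_top_of_surjective dfccF hsurj,
      Nat.card_congr AddSubgroup.topEquiv.toEquiv, Nat.card_zmod]
  · rintro ⟨x, y, z⟩ hv hne
    rw [AddMonoidHom.mem_ker, dfccF_eq_zero_iff] at hv
    by_contra hlt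
    push_neg at hlt
    simp only at hlt
    have h9 : x ^ 2 + y ^ 2 + z ^ 2 ≤ 9 := by omega
    have hx : -3 ≤ x ∧ x ≤ 3 := by constructor <;> nlinarith [sq_nonneg y, sq_nonneg z]
    have hy : -3 ≤ y ∧ y ≤ 3 := by constructor <;> nlinarith [sq_nonneg x, sq_nonneg z]
    have hz : -3 ≤ z ∧ z ≤ 3 := by constructor <;> nlinarith [sq_nonneg x, sq_nonneg y]
    have hne' : ¬(x = 0 ∧ y = 0 ∧ z = 0) := by
      rintro ⟨rfl, rfl, rfl⟩; exact hne rfl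
    obtain ⟨t, ht⟩ := hv
    obtain ⟨hx1, hx2⟩ := hx
    obtain ⟨hy1, hy2⟩ := hy
    obtain ⟨hz1, hz2⟩ := hz
    interval_cases x <;> interval_cases y <;> interval_cases z <;> omega
end

section
/- The lattice φ = { m·(4,0,0) + n·(0,4,0) + k·(2,2,2) : m, n, k ∈ ℤ } is a subgroup of ℤ³ of index 32, and every nonzero vector of φ has squared Euclidean norm at least 12. -/
noncomputable def bccHom : (ℤ × ℤ × ℤ) →+ (ZMod 4 × ZMod 4 × ZMod 2) where
  toFun v := (((v.1 - v.2.2 : ℤ) : ZMod 4), ((v.2.1 - v.2.2 : ℤ) : ZMod 4),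
    ((v.2.2 : ℤ) : ZMod 2))
  map_zero' := by simp
  map_add' a b := by
    refine Prod.ext ?_ (Prod.ext ?_ ?_) <;> simp <;> ring

lemma bccHom_ker : (bccHom.ker : Set (ℤ × ℤ × ℤ)) =
    {v | ∃ m n k : ℤ, v = (4 * m + 2 * k, 4 * n + 2 * k, 2 * k)} := by
  ext ⟨x, y, z⟩
  simp only [SetLike.mem_coe, AddMonoidHom.mem_ker, bccHom, AddMonoidHom.coe_mk,
    ZeroHom.coe_mk, Prod.mk_eq_zero, Set.mem_setOf_eq,
    ZMod.intCast_zmod_eq_zero_iff_dvd]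
  constructor
  · rintro ⟨⟨p, hp⟩, ⟨q, hq⟩, ⟨k, hk⟩⟩
    exact ⟨p, q, k, by simp [Prod.ext_iff]; omega⟩
  · rintro ⟨m, n, k, h⟩
    simp [Prod.ext_iff] at h
    exact ⟨⟨m, by omega⟩, ⟨n, by omega⟩, ⟨k, by omega⟩⟩

lemma bccHom_surj : Function.Surjective bccHom := by
  rintro ⟨a, b, c⟩
  refine ⟨((a.val : ℤ) + c.val, (b.val : ℤ) + c.val, (c.val : ℤ)), ?_⟩
  simp [bccHom, Prod.ext_iff, ZMod.natCast_val, ZMod.intCast_cast, ZMod.intCast_zmod_cast]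

theorem bcc_D2_12 :
    ∃ H : AddSubgroup (ℤ × ℤ × ℤ),
      (H : Set (ℤ × ℤ × ℤ)) =
        {v | ∃ m n k : ℤ, v = (4 * m + 2 * k, 4 * n + 2 * k, 2 * k)} ∧
      H.index = 32 ∧
      ∀ v : ℤ × ℤ × ℤ, v ∈ H → v ≠ 0 →
        v.1 ^ 2 + v.2.1 ^ 2 + v.2.2 ^ 2 ≥ 12 := by
  refine ⟨bccHom.ker, bccHom_ker, ?_, ?_⟩
  · rw [AddSubgroup.index_ker, AddMonoidHom.range_eq_top_of_surjective _ bccHom_surj,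
      Nat.card_congr AddSubgroup.topEquiv.toEquiv]
    simp [Nat.card_eq_fintype_card]
  · intro v hv hne
    have hv' : v ∈ (bccHom.ker : Set (ℤ × ℤ × ℤ)) := hv
    rw [bccHom_ker] at hv'
    obtain ⟨m, n, k, rfl⟩ := hv'
    simp only [ne_eq, Prod.mk.injEq, not_and] at hne ⊢
    rcases Int.even_or_odd k with ⟨t, ht⟩ | ⟨t, ht⟩
    · subst ht
      have h0 : ¬(m + t = 0 ∧ n + t = 0 ∧ t = 0) := by
        intro ⟨h1, h2, h3⟩
        apply hne
        simp [Prod.ext_iff]; omega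
      rcases not_and_or.mp h0 with h | h
      · nlinarith [sq_nonneg (4*m+2*(t+t)), sq_nonneg (4*n+2*(t+t)), sq_nonneg (2*(t+t)),
          Int.one_le_abs (show m + t ≠ 0 from h), sq_abs (m+t), sq_nonneg (|m+t| - 1)]
      · rcases not_and_or.mp h with h | h
        · nlinarith [Int.one_le_abs (show n + t ≠ 0 from h), sq_abs (n+t),
            sq_nonneg (|n+t| - 1), sq_nonneg (4*m+2*(t+t)), sq_nonneg (2*(t+t))]
        · nlinarith [Int.one_le_abs (show t ≠ 0 from h), sq_abs t,
            sq_nonneg (|t| - 1), sq_nonneg (4*m+2*(t+t)), sq_nonneg (4*n+2*(t+t))]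
    · subst ht
      have h1 : (2*m + 2*t + 1) ≠ 0 := by omega
      have h2 : (2*n + 2*t + 1) ≠ 0 := by omega
      have h3 : (2*t + 1) ≠ 0 := by omega
      nlinarith [Int.one_le_abs h1, Int.one_le_abs h2, Int.one_le_abs h3,
        sq_abs (2*m+2*t+1), sq_abs (2*n+2*t+1), sq_abs (2*t+1),
        sq_nonneg (|2*m+2*t+1| - 1), sq_nonneg (|2*n+2*t+1| - 1), sq_nonneg (|2*t+1| - 1)]
end

section
/- Let n be a nonnegative integer and ℓ = 2ⁿ. Then every solution in integers (m, n', k) of m² + n'² + k² = ℓ² is trivial, i.e., two of the three numbers m, n', k are zero (and the remaining one is ±ℓ). -/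
private lemma sq_mod_four (m : ℤ) : m ^ 2 % 4 = 0 ∨ m ^ 2 % 4 = 1 := by
  rcases Int.even_or_odd m with ⟨a, ha⟩ | ⟨a, ha⟩
  · left; subst ha; ring_nf; omega
  · right; subst ha; ring_nf; omega

private lemma even_of_sq_mod_four (m : ℤ) (h : m ^ 2 % 4 = 0) : ∃ a, m = 2 * a := by
  rcases Int.even_or_odd m with ⟨a, ha⟩ | ⟨a, ha⟩
  · exact ⟨a, by omega⟩
  · exfalso; subst ha; ring_nf at h; omega

theorem power_of_two_trivial_quadruples (n : ℕ) (m n' k : ℤ)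
    (h : m ^ 2 + n' ^ 2 + k ^ 2 = ((2 : ℤ) ^ n) ^ 2) :
    (m = 0 ∧ n' = 0) ∨ (m = 0 ∧ k = 0) ∨ (n' = 0 ∧ k = 0) := by
  induction n generalizing m n' k with
  | zero =>
    simp only [pow_zero, one_pow] at h
    have hm := sq_nonneg m; have hn := sq_nonneg n'; have hk := sq_nonneg k
    have hm1 : m ^ 2 ≤ 1 := by nlinarith
    have hn1 : n' ^ 2 ≤ 1 := by nlinarith
    have hk1 : k ^ 2 ≤ 1 := by nlinarith
    have hm' : m = -1 ∨ m = 0 ∨ m = 1 := by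
      have l1 : -1 ≤ m := by nlinarith [sq_nonneg (m + 1)]
      have l2 : m ≤ 1 := by nlinarith [sq_nonneg (m - 1)]
      omega
    have hn' : n' = -1 ∨ n' = 0 ∨ n' = 1 := by
      have l1 : -1 ≤ n' := by nlinarith [sq_nonneg (n' + 1)]
      have l2 : n' ≤ 1 := by nlinarith [sq_nonneg (n' - 1)]
      omega
    have hk' : k = -1 ∨ k = 0 ∨ k = 1 := by
      have l1 : -1 ≤ k := by nlinarith [sq_nonneg (k + 1)]
      have l2 : k ≤ 1 := by nlinarith [sq_nonneg (k - 1)]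
      omega
    rcases hm' with h1 | h1 | h1 <;> rcases hn' with h2 | h2 | h2 <;>
      rcases hk' with h3 | h3 | h3 <;> subst h1 <;> subst h2 <;> subst h3 <;> simp_all <;> omega
  | succ n ih =>
    have hrhs : ((2 : ℤ) ^ (n + 1)) ^ 2 = 4 * ((2 : ℤ) ^ n) ^ 2 := by ring
    rw [hrhs] at h
    have h4 : (m ^ 2 + n' ^ 2 + k ^ 2) % 4 = 0 := by omega
    have hm4 : m ^ 2 % 4 = 0 ∧ n' ^ 2 % 4 = 0 ∧ k ^ 2 % 4 = 0 := by
      rcases sq_mod_four m with h1 | h1 <;> rcases sq_mod_four n' with h2 | h2 <;>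
        rcases sq_mod_four k with h3 | h3 <;> omega
    obtain ⟨a, ha⟩ := even_of_sq_mod_four m hm4.1
    obtain ⟨b, hb⟩ := even_of_sq_mod_four n' hm4.2.1
    obtain ⟨c, hc⟩ := even_of_sq_mod_four k hm4.2.2
    subst ha hb hc
    have h' : a ^ 2 + b ^ 2 + c ^ 2 = ((2 : ℤ) ^ n) ^ 2 := by nlinarith
    rcases ih a b c h' with ⟨h1, h2⟩ | ⟨h1, h2⟩ | ⟨h1, h2⟩ <;> subst h1 <;> subst h2 <;> simp
end

section
/- Let p be an odd prime with p ≡ 1 (mod 4). Then there exist unique positive integers a > b with gcd(a, b) = 1 and a² + b² = p. -/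
/-- Key uniqueness step: if two ordered coprime pairs both represent the prime `p`
as a sum of two squares, they coincide. -/
lemma fermat_pairs_eq (p a b c d : ℕ) (hp : p.Prime)
    (hb : 0 < b) (hba : b < a) (hab : Nat.Coprime a b) (hsum : a ^ 2 + b ^ 2 = p)
    (hd : 0 < d) (hdc : d < c) (hcd : Nat.Coprime c d) (hsum' : c ^ 2 + d ^ 2 = p) :
    a = c ∧ b = d := by
  have hpZ : Prime (p : ℤ) := Nat.prime_iff_prime_int.mp hp
  have hS : (a : ℤ) ^ 2 + (b : ℤ) ^ 2 = p := by exact_mod_cast hsum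
  have hS' : (c : ℤ) ^ 2 + (d : ℤ) ^ 2 = p := by exact_mod_cast hsum'
  have hA : (0 : ℤ) < a := by exact_mod_cast hb.trans hba
  have hB : (0 : ℤ) < b := by exact_mod_cast hb
  have hC : (0 : ℤ) < c := by exact_mod_cast hd.trans hdc
  have hD : (0 : ℤ) < d := by exact_mod_cast hd
  have hdvd : (p : ℤ) ∣ ((a : ℤ) * d - b * c) * ((a : ℤ) * d + b * c) := by
    have : ((a : ℤ) * d - b * c) * ((a : ℤ) * d + b * c)
        = (d : ℤ) ^ 2 * ((a : ℤ) ^ 2 + b ^ 2) - (b : ℤ) ^ 2 * ((c : ℤ) ^ 2 + d ^ 2) := by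
      ring
    rw [this, hS, hS']
    exact ⟨(d : ℤ) ^ 2 - (b : ℤ) ^ 2, by ring⟩
  rcases hpZ.dvd_mul.mp hdvd with hc1 | hc2
  · -- p ∣ ad - bc : show ad = bc, then a = c, b = d
    have hsq : ((a : ℤ) * c + b * d) ^ 2 + ((a : ℤ) * d - b * c) ^ 2 = (p : ℤ) ^ 2 := by
      have : ((a : ℤ) * c + b * d) ^ 2 + ((a : ℤ) * d - b * c) ^ 2
          = ((a : ℤ) ^ 2 + b ^ 2) * ((c : ℤ) ^ 2 + d ^ 2) := by ring
      rw [this, hS, hS']; ring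
    have hpos : 0 < (a : ℤ) * c + b * d := by positivity
    have hzero : (a : ℤ) * d - b * c = 0 := by
      by_contra hne
      have h1 : (p : ℤ) ≤ |(a : ℤ) * d - b * c| := by
        have := Int.le_of_dvd (abs_pos.mpr hne) ((dvd_abs _ _).mpr hc1)
        simpa using this
      have h2 : (p : ℤ) ^ 2 ≤ ((a : ℤ) * d - b * c) ^ 2 := by
        rw [← sq_abs ((a : ℤ) * d - b * c)]
        exact pow_le_pow_left₀ (Int.ofNat_nonneg p) h1 2
      nlinarith
    have had : a * d = b * c := by
      have : (a : ℤ) * d = b * c := by linarith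
      exact_mod_cast this
    have ha_dvd : a ∣ c := Nat.Coprime.dvd_of_dvd_mul_right hab ⟨d, by rw [mul_comm]; exact had.symm⟩
    have hc_dvd : c ∣ a := by
      exact Nat.Coprime.dvd_of_dvd_mul_right hcd ⟨b, by rw [had]; exact mul_comm b c⟩
    have hac : a = c := Nat.dvd_antisymm ha_dvd hc_dvd
    constructor
    · exact hac
    · subst hac
      have : a * d = a * b := by rw [had, Nat.mul_comm]
      exact (Nat.eq_of_mul_eq_mul_left (hb.trans hba) this).symm
  · -- p ∣ ad + bc : derive a contradiction
    exfalso
    have hsq : ((a : ℤ) * c - b * d) ^ 2 + ((a : ℤ) * d + b * c) ^ 2 = (p : ℤ) ^ 2 := by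
      have : ((a : ℤ) * c - b * d) ^ 2 + ((a : ℤ) * d + b * c) ^ 2
          = ((a : ℤ) ^ 2 + b ^ 2) * ((c : ℤ) ^ 2 + d ^ 2) := by ring
      rw [this, hS, hS']; ring
    have hpos : 0 < (a : ℤ) * d + b * c := by positivity
    have hle : (p : ℤ) ≤ (a : ℤ) * d + b * c := Int.le_of_dvd hpos hc2
    have hppos : (0 : ℤ) < p := by exact_mod_cast hp.pos
    have hsq2 : ((a : ℤ) * d + b * c) ^ 2 ≤ (p : ℤ) ^ 2 := by
      nlinarith [sq_nonneg ((a : ℤ) * c - b * d)]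
    have heq : (a : ℤ) * d + b * c = p :=
      le_antisymm ((pow_le_pow_iff_left₀ hpos.le hppos.le two_ne_zero).mp hsq2) hle
    have hzero : (a : ℤ) * c - b * d = 0 := by
      have h0 : ((a : ℤ) * c - b * d) ^ 2 = 0 := by rw [heq] at hsq; linarith
      exact pow_eq_zero_iff two_ne_zero |>.mp h0
    have hac : a * c = b * d := by
      have : (a : ℤ) * c = b * d := by linarith
      exact_mod_cast this
    have ha_dvd : a ∣ d := Nat.Coprime.dvd_of_dvd_mul_right hab ⟨c, by rw [mul_comm]; exact hac.symm⟩
    have hd_dvd : d ∣ a := by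
      exact Nat.Coprime.dvd_of_dvd_mul_left hcd.symm ⟨b, by rw [mul_comm c a, hac, mul_comm b d]⟩
    have had : a = d := Nat.dvd_antisymm ha_dvd hd_dvd
    subst had
    have : a * c = a * b := by rw [hac, Nat.mul_comm]
    have hcb : c = b := Nat.eq_of_mul_eq_mul_left (hb.trans hba) this
    omega

theorem fermat_two_squares_unique (p : ℕ) (hp : p.Prime) (h1 : p % 4 = 1) :
    ∃! ab : ℕ × ℕ, 0 < ab.2 ∧ ab.2 < ab.1 ∧ Nat.Coprime ab.1 ab.2 ∧
      ab.1 ^ 2 + ab.2 ^ 2 = p := by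
  haveI : Fact p.Prime := ⟨hp⟩
  obtain ⟨a, b, hab⟩ := Nat.Prime.sq_add_sq (p := p) (by omega)
  have hp5 : 5 ≤ p := by have h2 := hp.two_le; omega
  -- normalize: get x > y > 0 coprime with x² + y² = p
  have key : ∀ x y : ℕ, x ^ 2 + y ^ 2 = p → 0 < y ∧ y < x ∧ Nat.Coprime x y ∨
      0 < x ∧ x < y ∧ Nat.Coprime y x := by
    intro x y hxy
    have hxne : x ≠ y := by
      rintro rfl
      have : p = 2 * x ^ 2 := by omega
      have h2 : 2 ∣ p := ⟨x ^ 2, this⟩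
      have := hp.eq_one_or_self_of_dvd 2 h2
      omega
    have hxy0 : x ≠ 0 ∨ y ≠ 0 := by
      by_contra h
      push_neg at h
      omega
    have hcop : ∀ u v : ℕ, u ^ 2 + v ^ 2 = p → Nat.Coprime u v := by
      intro u v huv
      have hg : Nat.gcd u v ∣ u := Nat.gcd_dvd_left u v
      have hg' : Nat.gcd u v ∣ v := Nat.gcd_dvd_right u v
      have hgp : Nat.gcd u v ^ 2 ∣ p := by
        rw [← huv]
        exact Dvd.dvd.add (pow_dvd_pow_of_dvd hg 2) (pow_dvd_pow_of_dvd hg' 2)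
      have := (Nat.dvd_prime hp).mp (dvd_trans (dvd_pow_self _ (two_ne_zero)) hgp)
      rcases this with h | h
      · exact h
      · exfalso
        have : Nat.gcd u v ^ 2 ∣ p := hgp
        rw [h] at this
        have hle := Nat.le_of_dvd hp.pos this
        nlinarith
    have hx0 : x ≠ 0 := by
      rintro rfl
      simp at hxy
      -- p = y², contradiction with primality
      have : y ∣ p := by rw [← hxy]; exact dvd_pow_self y two_ne_zero
      rcases (Nat.dvd_prime hp).mp this with h | h <;> nlinarith
    have hy0 : y ≠ 0 := by
      rintro rfl
      simp at hxy
      have : x ∣ p := by rw [← hxy]; exact dvd_pow_self x two_ne_zero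
      rcases (Nat.dvd_prime hp).mp this with h | h <;> nlinarith
    rcases Nat.lt_or_ge y x with h | h
    · exact Or.inl ⟨Nat.pos_of_ne_zero hy0, h, hcop x y hxy⟩
    · refine Or.inr ⟨Nat.pos_of_ne_zero hx0, ?_, hcop y x (by omega)⟩
      omega
  rcases key a b hab with ⟨h1', h2', h3'⟩ | ⟨h1', h2', h3'⟩
  · refine ⟨(a, b), ⟨h1', h2', h3', hab⟩, ?_⟩
    rintro ⟨c, d⟩ ⟨hd, hdc, hcd, hsum'⟩
    obtain ⟨h₁, h₂⟩ := fermat_pairs_eq p c d a b hp hd hdc hcd hsum' h1' h2' h3' hab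
    simp [h₁, h₂]
  · refine ⟨(b, a), ⟨h1', h2', h3', by show b ^ 2 + a ^ 2 = p; omega⟩, ?_⟩
    rintro ⟨c, d⟩ ⟨hd, hdc, hcd, hsum'⟩
    obtain ⟨h₁, h₂⟩ := fermat_pairs_eq p c d b a hp hd hdc hcd hsum' h1' h2' h3' (by omega)
    simp [h₁, h₂]
end

section
/- The only subgroup L of ℤ³ that has a basis of three mutually orthogonal integer vectors of common length ℓ and is invariant under the rotation by π/2 about the x₃-axis (the map (x₁,x₂,x₃) ↦ (x₂,−x₁,x₃)) as well as under the rotation by 2π/3 about the diagonal (1,1,1) (the cyclic coordinate shift (x₁,x₂,x₃) ↦ (x₃,x₁,x₂)) is L = ℓℤ³. -/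
theorem symmetric_cubic_sublattice_is_scaled (ℓ : ℤ) (hℓ : 0 < ℓ)
    (L : AddSubgroup (ℤ × ℤ × ℤ)) (x₁ x₂ x₃ : ℤ × ℤ × ℤ)
    (hbasis : ∀ v, v ∈ L ↔ ∃ m n k : ℤ, v = m • x₁ + n • x₂ + k • x₃)
    (h11 : x₁.1 ^ 2 + x₁.2.1 ^ 2 + x₁.2.2 ^ 2 = ℓ ^ 2)
    (h22 : x₂.1 ^ 2 + x₂.2.1 ^ 2 + x₂.2.2 ^ 2 = ℓ ^ 2)
    (h33 : x₃.1 ^ 2 + x₃.2.1 ^ 2 + x₃.2.2 ^ 2 = ℓ ^ 2)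
    (h12 : x₁.1 * x₂.1 + x₁.2.1 * x₂.2.1 + x₁.2.2 * x₂.2.2 = 0)
    (h13 : x₁.1 * x₃.1 + x₁.2.1 * x₃.2.1 + x₁.2.2 * x₃.2.2 = 0)
    (h23 : x₂.1 * x₃.1 + x₂.2.1 * x₃.2.1 + x₂.2.2 * x₃.2.2 = 0)
    (hrot : ∀ v ∈ L, ((v.2.1, -v.1, v.2.2) : ℤ × ℤ × ℤ) ∈ L)
    (hcyc : ∀ v ∈ L, ((v.2.2, v.1, v.2.1) : ℤ × ℤ × ℤ) ∈ L) :
    ∀ v : ℤ × ℤ × ℤ, v ∈ L ↔ ∃ a b c : ℤ, v = (ℓ * a, ℓ * b, ℓ * c) := by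
  have hℓ2 : (ℓ:ℤ)^2 ≠ 0 := pow_ne_zero _ hℓ.ne'
  -- dot products of lattice vectors are divisible by ℓ²
  have hdot : ∀ v ∈ L, ∀ w ∈ L, ℓ^2 ∣ (v.1*w.1 + v.2.1*w.2.1 + v.2.2*w.2.2) := by
    intro v hv w hw
    obtain ⟨m, n, k, hv⟩ := (hbasis v).1 hv
    obtain ⟨m', n', k', hw⟩ := (hbasis w).1 hw
    refine ⟨m*m' + n*n' + k*k', ?_⟩
    subst hv hw
    simp only [Prod.fst_add, Prod.snd_add, Prod.smul_fst, Prod.smul_snd, smul_eq_mul]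
    linear_combination (m*m') * h11 + (n*n') * h22 + (k*k') * h33 +
      (m*n' + n*m') * h12 + (m*k' + k*m') * h13 + (n*k' + k*n') * h23
  -- every lattice vector has coordinates divisible by ℓ
  have key : ∀ v ∈ L, ℓ ∣ v.1 ∧ ℓ ∣ v.2.1 ∧ ℓ ∣ v.2.2 := by
    intro v hv
    have h1 : ((v.1, -v.2.2, v.2.1) : ℤ × ℤ × ℤ) ∈ L := hrot _ (hcyc _ hv)
    have h2 : ((v.2.2, v.2.1, -v.1) : ℤ × ℤ × ℤ) ∈ L := hcyc _ (hrot _ hv)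
    have h3 : ((v.2.1, -v.1, v.2.2) : ℤ × ℤ × ℤ) ∈ L := hrot _ hv
    have d1 := hdot v hv _ h1
    have d2 := hdot v hv _ h2
    have d3 := hdot v hv _ h3
    simp only at d1 d2 d3
    refine ⟨?_, ?_, ?_⟩
    · have hd : ℓ^2 ∣ v.1^2 := by
        have he : v.1 * v.1 + v.2.1 * -v.2.2 + v.2.2 * v.2.1 = v.1^2 := by ring
        rwa [he] at d1
      exact (Int.pow_dvd_pow_iff two_ne_zero).mp hd
    · have hd : ℓ^2 ∣ v.2.1^2 := by
        have he : v.1 * v.2.2 + v.2.1 * v.2.1 + v.2.2 * -v.1 = v.2.1^2 := by ring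
        rwa [he] at d2
      exact (Int.pow_dvd_pow_iff two_ne_zero).mp hd
    · have hd : ℓ^2 ∣ v.2.2^2 := by
        have he : v.1 * v.2.1 + v.2.1 * -v.1 + v.2.2 * v.2.2 = v.2.2^2 := by ring
        rwa [he] at d3
      exact (Int.pow_dvd_pow_iff two_ne_zero).mp hd
  have hx₁ : x₁ ∈ L := (hbasis x₁).2 ⟨1, 0, 0, by simp⟩
  have hx₂ : x₂ ∈ L := (hbasis x₂).2 ⟨0, 1, 0, by simp⟩
  have hx₃ : x₃ ∈ L := (hbasis x₃).2 ⟨0, 0, 1, by simp⟩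
  obtain ⟨⟨a₁, ha₁⟩, ⟨b₁, hb₁⟩, ⟨c₁, hc₁⟩⟩ := key x₁ hx₁
  obtain ⟨⟨a₂, ha₂⟩, ⟨b₂, hb₂⟩, ⟨c₂, hc₂⟩⟩ := key x₂ hx₂
  obtain ⟨⟨a₃, ha₃⟩, ⟨b₃, hb₃⟩, ⟨c₃, hc₃⟩⟩ := key x₃ hx₃
  -- reduced row relations
  have r11 : a₁^2 + b₁^2 + c₁^2 = 1 := by
    have h : ℓ^2 * (a₁^2 + b₁^2 + c₁^2) = ℓ^2 * 1 := by
      rw [ha₁, hb₁, hc₁] at h11; linear_combination h11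
    exact mul_left_cancel₀ hℓ2 h
  have r22 : a₂^2 + b₂^2 + c₂^2 = 1 := by
    have h : ℓ^2 * (a₂^2 + b₂^2 + c₂^2) = ℓ^2 * 1 := by
      rw [ha₂, hb₂, hc₂] at h22; linear_combination h22
    exact mul_left_cancel₀ hℓ2 h
  have r33 : a₃^2 + b₃^2 + c₃^2 = 1 := by
    have h : ℓ^2 * (a₃^2 + b₃^2 + c₃^2) = ℓ^2 * 1 := by
      rw [ha₃, hb₃, hc₃] at h33; linear_combination h33
    exact mul_left_cancel₀ hℓ2 h
  have r12 : a₁*a₂ + b₁*b₂ + c₁*c₂ = 0 := by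
    have h : ℓ^2 * (a₁*a₂ + b₁*b₂ + c₁*c₂) = ℓ^2 * 0 := by
      rw [ha₁, hb₁, hc₁, ha₂, hb₂, hc₂] at h12; linear_combination h12
    exact mul_left_cancel₀ hℓ2 h
  have r13 : a₁*a₃ + b₁*b₃ + c₁*c₃ = 0 := by
    have h : ℓ^2 * (a₁*a₃ + b₁*b₃ + c₁*c₃) = ℓ^2 * 0 := by
      rw [ha₁, hb₁, hc₁, ha₃, hb₃, hc₃] at h13; linear_combination h13
    exact mul_left_cancel₀ hℓ2 h
  have r23 : a₂*a₃ + b₂*b₃ + c₂*c₃ = 0 := by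
    have h : ℓ^2 * (a₂*a₃ + b₂*b₃ + c₂*c₃) = ℓ^2 * 0 := by
      rw [ha₂, hb₂, hc₂, ha₃, hb₃, hc₃] at h23; linear_combination h23
    exact mul_left_cancel₀ hℓ2 h
  -- matrix argument: columns are also orthonormal
  have hY : (!![a₁, b₁, c₁; a₂, b₂, c₂; a₃, b₃, c₃] : Matrix (Fin 3) (Fin 3) ℤ) *
      (!![a₁, a₂, a₃; b₁, b₂, b₃; c₁, c₂, c₃] : Matrix (Fin 3) (Fin 3) ℤ) = 1 := by
    ext i j
    fin_cases i <;> fin_cases j <;>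
      simp [Matrix.mul_apply, Fin.sum_univ_three, Matrix.one_apply] <;>
      [linear_combination r11; linear_combination r12; linear_combination r13;
       linear_combination r12; linear_combination r22; linear_combination r23;
       linear_combination r13; linear_combination r23; linear_combination r33]
  have hY' := mul_eq_one_comm.mp hY
  have e : ∀ i j, ((!![a₁, a₂, a₃; b₁, b₂, b₃; c₁, c₂, c₃] : Matrix (Fin 3) (Fin 3) ℤ) *
      (!![a₁, b₁, c₁; a₂, b₂, c₂; a₃, b₃, c₃] : Matrix (Fin 3) (Fin 3) ℤ)) i j
      = (1 : Matrix (Fin 3) (Fin 3) ℤ) i j := fun i j => by rw [hY']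
  have e00 := e 0 0; have e01 := e 0 1; have e02 := e 0 2
  have e11 := e 1 1; have e12 := e 1 2; have e22 := e 2 2
  simp [Matrix.mul_apply, Fin.sum_univ_three, Matrix.one_apply] at e00 e01 e02 e11 e12 e22
  -- main statement
  intro v
  constructor
  · intro hv
    obtain ⟨m, n, k, hv⟩ := (hbasis v).1 hv
    refine ⟨m*a₁ + n*a₂ + k*a₃, m*b₁ + n*b₂ + k*b₃, m*c₁ + n*c₂ + k*c₃, ?_⟩
    subst hv
    simp only [Prod.ext_iff, Prod.fst_add, Prod.snd_add, Prod.smul_fst, Prod.smul_snd,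
      smul_eq_mul]
    refine ⟨?_, ?_, ?_⟩
    · rw [ha₁, ha₂, ha₃]; ring
    · rw [hb₁, hb₂, hb₃]; ring
    · rw [hc₁, hc₂, hc₃]; ring
  · rintro ⟨a, b, c, rfl⟩
    refine (hbasis _).2 ⟨a*a₁ + b*b₁ + c*c₁, a*a₂ + b*b₂ + c*c₂, a*a₃ + b*b₃ + c*c₃, ?_⟩
    simp only [Prod.ext_iff, Prod.fst_add, Prod.snd_add, Prod.smul_fst, Prod.smul_snd,
      smul_eq_mul]
    refine ⟨?_, ?_, ?_⟩
    · rw [ha₁, ha₂, ha₃]; linear_combination (-ℓ*a)*e00 + (-ℓ*b)*e01 + (-ℓ*c)*e02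
    · rw [hb₁, hb₂, hb₃]; linear_combination (-ℓ*a)*e01 + (-ℓ*b)*e11 + (-ℓ*c)*e12
    · rw [hc₁, hc₂, hc₃]; linear_combination (-ℓ*a)*e02 + (-ℓ*b)*e12 + (-ℓ*c)*e22
end
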